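/- arXiv:2107.08676 — 5 statements merged into one kernel-verified Lean document; each statement's English description precedes it below -/
import Mathlib

section
/- Let f be an n-variable Boolean function and t ∈ [n]. Then t-inf(f) = (1/C(n,t)) Σ_{k=1}^{n} N_{n,t,k} · p̂_f(k), where N_{n,t,k} = C(n,t) − C(n−k,t). -/
open Finset

namespace BF

/-- Hamming weight of a vector in `F_2^n`. -/
def wt {n : ℕ} (a : Fin n → ZMod 2) : ℕ := (univ.filter fun i => a i ≠ 0).card

/-- Normalised Walsh transform `W_f(a) = 2^{-n} Σ_x (-1)^{f(x) ⊕ ⟨x,a⟩}`. -/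
noncomputable def walsh {n : ℕ} (f : (Fin n → ZMod 2) → ZMod 2) (a : Fin n → ZMod 2) : ℝ :=
  (1 / 2 ^ n) * ∑ x : Fin n → ZMod 2, (-1 : ℝ) ^ (f x + ∑ i, x i * a i).val

/-- Normalised auto-correlation `C_f(a) = 2^{-n} Σ_x (-1)^{f(x) ⊕ f(x ⊕ a)}`. -/
noncomputable def autocorr {n : ℕ} (f : (Fin n → ZMod 2) → ZMod 2) (a : Fin n → ZMod 2) : ℝ :=
  (1 / 2 ^ n) * ∑ x : Fin n → ZMod 2, (-1 : ℝ) ^ (f x + f (x + a)).val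

/-- Influence of the set of variables `T` on `f`:
`inf_f(T) = 1 - 2^{-#T} Σ_{a ≤ χ_T} C_f(a)`. -/
noncomputable def influence {n : ℕ} (f : (Fin n → ZMod 2) → ZMod 2) (T : Finset (Fin n)) : ℝ :=
  1 - (1 / 2 ^ T.card) *
    ∑ a ∈ univ.filter (fun a : Fin n → ZMod 2 => ∀ i, a i ≠ 0 → i ∈ T), autocorr f a

/-- Total influence `t-inf(f) = (Σ_{#T = t} inf_f(T)) / C(n,t)`. -/
noncomputable def totalInf {n : ℕ} (f : (Fin n → ZMod 2) → ZMod 2) (t : ℕ) : ℝ :=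
  (∑ T ∈ univ.filter (fun T : Finset (Fin n) => T.card = t), influence f T) / (n.choose t)

/-- `p̂_f(k) = Σ_{wt(u) = k} (W_f(u))²`. -/
noncomputable def pHat {n : ℕ} (f : (Fin n → ZMod 2) → ZMod 2) (k : ℕ) : ℝ :=
  ∑ u ∈ univ.filter (fun u : Fin n → ZMod 2 => wt u = k), (walsh f u) ^ 2


/- Auxiliary lemmas -/
noncomputable def chi (b : ZMod 2) : ℝ := (-1) ^ b.val

lemma zmod2_cases (a : ZMod 2) : a = 0 ∨ a = 1 := by revert a; decide

lemma chi_zero : chi 0 = 1 := by simp [chi]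

lemma val11 : ((1 : ZMod 2) + 1) = 0 := by decide
lemma val1 : (1 : ZMod 2).val = 1 := by decide

lemma chi_add (a b : ZMod 2) : chi (a + b) = chi a * chi b := by
  rcases zmod2_cases a with h | h <;> rcases zmod2_cases b with h' | h' <;>
    subst h <;> subst h' <;> simp [chi, val11, val1]

lemma chi_sum {ι : Type*} (s : Finset ι) (g : ι → ZMod 2) :
    chi (∑ i ∈ s, g i) = ∏ i ∈ s, chi (g i) := by
  induction s using Finset.cons_induction with
  | empty => simp [chi]
  | cons i s hi ih => rw [Finset.sum_cons, Finset.prod_cons, chi_add, ih]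

lemma sum_zmod2 (g : ZMod 2 → ℝ) : ∑ b : ZMod 2, g b = g 0 + g 1 := by
  rw [show (univ : Finset (ZMod 2)) = {0, 1} from by decide]
  simp

lemma one_add_chi (b : ZMod 2) : 1 + chi b = if b = 0 then 2 else 0 := by
  rcases zmod2_cases b with h | h <;> subst h <;> norm_num [chi, val1]

lemma sum_chi_ip {n : ℕ} (x : Fin n → ZMod 2) :
    ∑ u : Fin n → ZMod 2, chi (∑ i, x i * u i) = if x = 0 then (2:ℝ)^n else 0 := by
  have h1 : ∀ u : Fin n → ZMod 2, chi (∑ i, x i * u i) = ∏ i, chi (x i * u i) :=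
    fun u => chi_sum _ _
  simp_rw [h1]
  rw [← Fintype.piFinset_univ, ← Finset.prod_univ_sum (fun _ => (univ : Finset (ZMod 2))) (fun i b => chi (x i * b))]
  have h2 : ∀ i, ∑ b ∈ (univ : Finset (ZMod 2)), chi (x i * b) = if x i = 0 then (2:ℝ) else 0 := by
    intro i
    rw [sum_zmod2 (fun b => chi (x i * b)), mul_zero, mul_one, chi_zero, one_add_chi]
  simp_rw [h2]
  by_cases hx : x = 0
  · subst hx; simp
  · rw [if_neg hx]
    obtain ⟨i, hi⟩ : ∃ i, x i ≠ 0 := by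
      by_contra h; push_neg at h; exact hx (funext h)
    exact Finset.prod_eq_zero (mem_univ i) (if_neg hi)

lemma sum_chi_restricted {n : ℕ} (T : Finset (Fin n)) (u : Fin n → ZMod 2) :
    ∑ a ∈ univ.filter (fun a : Fin n → ZMod 2 => ∀ i, a i ≠ 0 → i ∈ T), chi (∑ i, a i * u i)
      = if (∀ i ∈ T, u i = 0) then (2:ℝ)^T.card else 0 := by
  have hset : univ.filter (fun a : Fin n → ZMod 2 => ∀ i, a i ≠ 0 → i ∈ T)
      = Fintype.piFinset (fun i => if i ∈ T then (univ : Finset (ZMod 2)) else {0}) := by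
    ext a
    simp only [mem_filter, mem_univ, true_and, Fintype.mem_piFinset]
    constructor
    · intro h i
      split_ifs with hiT
      · exact mem_univ _
      · simp only [mem_singleton]
        by_contra hne
        exact hiT (h i hne)
    · intro h i hne
      by_contra hiT
      have := h i
      rw [if_neg hiT] at this
      exact hne (mem_singleton.mp this)
  rw [hset]
  have h1 : ∀ a : Fin n → ZMod 2, chi (∑ i, a i * u i) = ∏ i, chi (a i * u i) :=
    fun a => chi_sum _ _
  simp_rw [h1]
  rw [← Finset.prod_univ_sum (fun i => if i ∈ T then (univ : Finset (ZMod 2)) else {0}) (fun i b => chi (b * u i))]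
  have h2 : ∀ i, ∑ b ∈ (if i ∈ T then (univ : Finset (ZMod 2)) else {0}), chi (b * u i)
      = if i ∈ T then (if u i = 0 then (2:ℝ) else 0) else 1 := by
    intro i
    by_cases hiT : i ∈ T
    · rw [if_pos hiT, if_pos hiT, sum_zmod2 (fun b => chi (b * u i)), zero_mul, one_mul,
        chi_zero, one_add_chi]
    · rw [if_neg hiT, if_neg hiT, Finset.sum_singleton, zero_mul, chi_zero]
  simp_rw [h2]
  rw [Finset.prod_ite_mem, Finset.univ_inter]
  by_cases hT : ∀ i ∈ T, u i = 0
  · rw [if_pos hT, Finset.prod_congr rfl (fun i hi => if_pos (hT i hi)), Finset.prod_const]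
  · rw [if_neg hT]
    push_neg at hT
    obtain ⟨i, hiT, hi⟩ := hT
    exact Finset.prod_eq_zero hiT (if_neg hi)
lemma walsh_chi {n : ℕ} (f : (Fin n → ZMod 2) → ZMod 2) (u : Fin n → ZMod 2) :
    walsh f u = (1 / 2 ^ n) * ∑ x : Fin n → ZMod 2, chi (f x + ∑ i, x i * u i) := rfl

lemma autocorr_chi {n : ℕ} (f : (Fin n → ZMod 2) → ZMod 2) (a : Fin n → ZMod 2) :
    autocorr f a = (1 / 2 ^ n) * ∑ x : Fin n → ZMod 2, chi (f x + f (x + a)) := rfl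

lemma neg_self_pi {n : ℕ} (z : Fin n → ZMod 2) : -z = z := by
  funext i; exact CharTwo.neg_eq _

lemma autocorr_eq {n : ℕ} (f : (Fin n → ZMod 2) → ZMod 2) (a : Fin n → ZMod 2) :
    autocorr f a = ∑ u : Fin n → ZMod 2, (walsh f u) ^ 2 * chi (∑ i, a i * u i) := by
  have hip : ∀ (x y u : Fin n → ZMod 2),
      chi (∑ i, x i * u i) * chi (∑ i, y i * u i) * chi (∑ i, a i * u i)
        = chi (∑ i, (x + y + a) i * u i) := by
    intro x y u
    rw [← chi_add, ← chi_add, ← Finset.sum_add_distrib, ← Finset.sum_add_distrib]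
    congr 1
    apply Finset.sum_congr rfl
    intro i _
    simp [add_mul]
  have key : ∀ u, (walsh f u) ^ 2 * chi (∑ i, a i * u i)
      = (1/2^n : ℝ)^2 * ∑ x : Fin n → ZMod 2, ∑ y : Fin n → ZMod 2,
          chi (f x) * chi (f y) * chi (∑ i, (x + y + a) i * u i) := by
    intro u
    rw [walsh_chi, mul_pow, sq ((∑ x : Fin n → ZMod 2, chi (f x + ∑ i, x i * u i))),
      Finset.sum_mul_sum, mul_assoc, Finset.sum_mul]
    congr 1
    apply Finset.sum_congr rfl
    intro x _
    rw [Finset.sum_mul]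
    apply Finset.sum_congr rfl
    intro y _
    rw [chi_add, chi_add, ← hip x y u]
    ring
  simp_rw [key]
  rw [← Finset.mul_sum, Finset.sum_comm]
  have inner : ∀ x : Fin n → ZMod 2,
      ∑ u : Fin n → ZMod 2, ∑ y : Fin n → ZMod 2,
        chi (f x) * chi (f y) * chi (∑ i, (x + y + a) i * u i)
      = chi (f x) * chi (f (x + a)) * 2 ^ n := by
    intro x
    rw [Finset.sum_comm]
    have h1 : ∀ y : Fin n → ZMod 2,
        ∑ u : Fin n → ZMod 2, chi (f x) * chi (f y) * chi (∑ i, (x + y + a) i * u i)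
          = if y = x + a then chi (f x) * chi (f y) * 2 ^ n else 0 := by
      intro y
      rw [← Finset.mul_sum, sum_chi_ip]
      have hcond : (x + y + a = 0) ↔ (y = x + a) := by
        rw [show x + y + a = y + (x + a) by abel, add_eq_zero_iff_eq_neg, neg_self_pi]
      by_cases hy : y = x + a
      · rw [if_pos hy, if_pos (hcond.mpr hy)]
      · rw [if_neg hy, if_neg (fun h => hy (hcond.mp h)), mul_zero]
    simp_rw [h1]
    rw [Finset.sum_ite_eq' univ (x + a) (fun y => chi (f x) * chi (f y) * 2 ^ n),
      if_pos (mem_univ _)]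
  simp_rw [inner]
  rw [autocorr_chi]
  have h2n : ((2:ℝ)^n) ≠ 0 := by positivity
  simp_rw [chi_add]
  rw [← Finset.sum_mul]
  have hc : ((1:ℝ)/2^n)^2 * 2^n = 1/2^n := by
    field_simp
  rw [mul_comm (∑ x : Fin n → ZMod 2, chi (f x) * chi (f (x + a))) ((2:ℝ)^n), ← mul_assoc, hc]
lemma autocorr_zero {n : ℕ} (f : (Fin n → ZMod 2) → ZMod 2) : autocorr f 0 = 1 := by
  rw [autocorr_chi]
  have h : ∀ x : Fin n → ZMod 2, chi (f x + f (x + 0)) = 1 := by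
    intro x; rw [add_zero, CharTwo.add_self_eq_zero, chi_zero]
  simp_rw [h]
  rw [Finset.sum_const, card_univ]
  have hcard : Fintype.card (Fin n → ZMod 2) = 2 ^ n := by
    simp [Fintype.card_fun]
  rw [hcard]
  simp

lemma parseval {n : ℕ} (f : (Fin n → ZMod 2) → ZMod 2) :
    ∑ u : Fin n → ZMod 2, (walsh f u) ^ 2 = 1 := by
  have h := autocorr_eq f 0
  rw [autocorr_zero] at h
  simp only [Pi.zero_apply, zero_mul, Finset.sum_const_zero, chi_zero, mul_one] at h
  exact h.symm

lemma influence_eq {n : ℕ} (f : (Fin n → ZMod 2) → ZMod 2) (T : Finset (Fin n)) :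
    influence f T = ∑ u : Fin n → ZMod 2,
      (walsh f u) ^ 2 * (if ∀ i ∈ T, u i = 0 then 0 else 1) := by
  unfold influence
  simp_rw [autocorr_eq f]
  rw [Finset.sum_comm]
  have h1 : ∀ u : Fin n → ZMod 2,
      ∑ a ∈ univ.filter (fun a : Fin n → ZMod 2 => ∀ i, a i ≠ 0 → i ∈ T),
        (walsh f u) ^ 2 * chi (∑ i, a i * u i)
      = (walsh f u) ^ 2 * (if ∀ i ∈ T, u i = 0 then (2:ℝ)^T.card else 0) := by
    intro u
    rw [← Finset.mul_sum, sum_chi_restricted]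
  simp_rw [h1]
  have h3 : (1 / 2 ^ T.card : ℝ) * ∑ u : Fin n → ZMod 2,
      (walsh f u) ^ 2 * (if ∀ i ∈ T, u i = 0 then (2:ℝ)^T.card else 0)
      = ∑ u : Fin n → ZMod 2, (walsh f u) ^ 2 * (if ∀ i ∈ T, u i = 0 then 1 else 0) := by
    rw [Finset.mul_sum]
    apply Finset.sum_congr rfl
    intro u _
    have h2T : ((2:ℝ) ^ T.card) ≠ 0 := by positivity
    by_cases hu : ∀ i ∈ T, u i = 0
    · rw [if_pos hu, if_pos hu]
      field_simp
    · rw [if_neg hu, if_neg hu]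
      ring
  rw [h3]
  nth_rewrite 1 [show (1:ℝ) = ∑ u : Fin n → ZMod 2, (walsh f u) ^ 2 from (parseval f).symm]
  rw [← Finset.sum_sub_distrib]
  apply Finset.sum_congr rfl
  intro u _
  by_cases hu : ∀ i ∈ T, u i = 0
  · rw [if_pos hu, if_pos hu]
    ring
  · rw [if_neg hu, if_neg hu]
    ring

lemma count_lemma {n t : ℕ} (u : Fin n → ZMod 2) :
    ∑ T ∈ univ.filter (fun T : Finset (Fin n) => T.card = t),
      (if ∀ i ∈ T, u i = 0 then (0:ℝ) else 1)
    = (n.choose t : ℝ) - ((n - wt u).choose t : ℝ) := by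
  have hA : (univ.filter (fun T : Finset (Fin n) => T.card = t)).card = n.choose t := by
    rw [← Finset.powerset_univ, ← Finset.powersetCard_eq_filter, Finset.card_powersetCard,
      card_univ, Fintype.card_fin]
  have hscard : (univ.filter (fun i => u i = 0) : Finset (Fin n)).card = n - wt u := by
    have h := Finset.card_filter_add_card_filter_not
      (s := (univ : Finset (Fin n))) (p := fun i => u i = 0)
    rw [card_univ, Fintype.card_fin] at h
    have hwt : (univ.filter (fun i => ¬ u i = 0) : Finset (Fin n)).card = wt u := rfl
    omega
  have hB : ((univ.filter (fun T : Finset (Fin n) => T.card = t)).filter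
      (fun T => ∀ i ∈ T, u i = 0)).card = (n - wt u).choose t := by
    have hEq : (univ.filter (fun T : Finset (Fin n) => T.card = t)).filter
        (fun T => ∀ i ∈ T, u i = 0)
        = Finset.powersetCard t (univ.filter (fun i => u i = 0)) := by
      ext T
      simp only [mem_filter, mem_univ, true_and, Finset.mem_powersetCard]
      constructor
      · rintro ⟨h1, h2⟩
        exact ⟨fun i hi => mem_filter.mpr ⟨mem_univ i, h2 i hi⟩, h1⟩
      · rintro ⟨h1, h2⟩
        exact ⟨h2, fun i hi => (mem_filter.mp (h1 hi)).2⟩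
    rw [hEq, Finset.card_powersetCard, hscard]
  have hC : ((univ.filter (fun T : Finset (Fin n) => T.card = t)).filter
      (fun T => ¬ ∀ i ∈ T, u i = 0)).card = n.choose t - (n - wt u).choose t := by
    have := Finset.card_filter_add_card_filter_not
      (s := univ.filter (fun T : Finset (Fin n) => T.card = t))
      (p := fun T => ∀ i ∈ T, u i = 0)
    rw [hA, hB] at this
    omega
  rw [Finset.sum_ite, Finset.sum_const, Finset.sum_const, hC]
  have hle : (n - wt u).choose t ≤ n.choose t :=
    Nat.choose_le_choose t (Nat.sub_le n (wt u))
  simp only [smul_zero, nsmul_eq_mul, mul_one, zero_add]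
  rw [Nat.cast_sub hle]

/-- `t-inf(f) = (1/C(n,t)) Σ_{k=1}^n N_{n,t,k} p̂_f(k)` with
`N_{n,t,k} = C(n,t) - C(n-k,t)`. -/
theorem totalInf_eq_sum_pHat {n : ℕ} (f : (Fin n → ZMod 2) → ZMod 2) (t : ℕ)
    (h1 : 1 ≤ t) (h2 : t ≤ n) :
    totalInf f t = (1 / (n.choose t : ℝ)) *
      ∑ k ∈ Finset.Icc 1 n, ((n.choose t : ℝ) - ((n - k).choose t : ℝ)) * pHat f k := by
  unfold totalInf
  simp_rw [influence_eq f]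
  rw [Finset.sum_comm]
  have h4 : ∀ u : Fin n → ZMod 2,
      ∑ T ∈ univ.filter (fun T : Finset (Fin n) => T.card = t),
        (walsh f u)^2 * (if ∀ i ∈ T, u i = 0 then (0:ℝ) else 1)
      = (walsh f u)^2 * ((n.choose t : ℝ) - ((n - wt u).choose t : ℝ)) := by
    intro u
    rw [← Finset.mul_sum, count_lemma]
  simp_rw [h4]
  have hfib : ∑ u : Fin n → ZMod 2,
      (walsh f u)^2 * ((n.choose t : ℝ) - ((n - wt u).choose t : ℝ))
      = ∑ k ∈ Finset.range (n+1), ∑ u ∈ univ.filter (fun u : Fin n → ZMod 2 => wt u = k),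
          (walsh f u)^2 * ((n.choose t : ℝ) - ((n - wt u).choose t : ℝ)) := by
    rw [Finset.sum_fiberwise_of_maps_to]
    intro u _
    rw [Finset.mem_range, Nat.lt_succ_iff]
    calc wt u ≤ (univ : Finset (Fin n)).card := Finset.card_filter_le _ _
    _ = n := by rw [card_univ, Fintype.card_fin]
  rw [hfib]
  have h5 : ∀ k ∈ Finset.range (n+1),
      ∑ u ∈ univ.filter (fun u : Fin n → ZMod 2 => wt u = k),
        (walsh f u)^2 * ((n.choose t : ℝ) - ((n - wt u).choose t : ℝ))
      = ((n.choose t : ℝ) - ((n - k).choose t : ℝ)) * pHat f k := by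
    intro k _
    rw [pHat, Finset.mul_sum]
    apply Finset.sum_congr rfl
    intro u hu
    rw [(Finset.mem_filter.mp hu).2]
    ring
  rw [Finset.sum_congr rfl h5]
  have hsub : Finset.Icc 1 n ⊆ Finset.range (n+1) := by
    intro k hk
    rw [Finset.mem_range, Nat.lt_succ_iff]
    exact (Finset.mem_Icc.mp hk).2
  rw [← Finset.sum_subset hsub (by
    intro k hk hk'
    rw [Finset.mem_range, Nat.lt_succ_iff] at hk
    rw [Finset.mem_Icc] at hk'
    have hk0 : k = 0 := by omega
    subst hk0
    simp)]
  rw [one_div, inv_mul_eq_div]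

end BF
end

section
/- Let f be an n-variable Boolean function and T ⊆ [n] a nonempty subset with #T = t. Then inf_f(T) = 1 − 2^{-(n−t)} Σ_{α ∈ F_2^{n−t}} (W_{f_α}(0_t))², where f_α is the t-variable function obtained from f by fixing the variables indexed by the complement of T to the respective values of α, and 0_t is the all-zero vector of length t. -/
open Finset

namespace BF

/-- Combine an assignment `y` on the coordinates in `T` with an assignment `a` on the
coordinates outside `T` into a full input vector. -/
def combine {n : ℕ} (T : Finset (Fin n)) (y : {i : Fin n // i ∈ T} → ZMod 2)
    (a : {i : Fin n // i ∉ T} → ZMod 2) : Fin n → ZMod 2 :=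
  fun i => if h : i ∈ T then y ⟨i, h⟩ else a ⟨i, h⟩

/-- The Walsh transform, at the all-zero point, of the restriction `f_a` of `f` obtained by
fixing the variables outside `T` to the values of `a`. -/
noncomputable def restWalsh0 {n : ℕ} (f : (Fin n → ZMod 2) → ZMod 2) (T : Finset (Fin n))
    (a : {i : Fin n // i ∉ T} → ZMod 2) : ℝ :=
  (1 / 2 ^ T.card) * ∑ y : {i : Fin n // i ∈ T} → ZMod 2, (-1 : ℝ) ^ (f (combine T y a)).val

private lemma npa (u v : ZMod 2) : (-1:ℝ)^(u+v).val = (-1)^u.val * (-1)^v.val := by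
  rw [← pow_add, ZMod.val_add, neg_one_pow_eq_pow_mod_two ((u.val + v.val) % 2),
    Nat.mod_mod_of_dvd _ dvd_rfl, ← neg_one_pow_eq_pow_mod_two]

private lemma combine_add {n : ℕ} (T : Finset (Fin n)) (y z : {i : Fin n // i ∈ T} → ZMod 2)
    (a : {i : Fin n // i ∉ T} → ZMod 2) :
    combine T y a + combine T z 0 = combine T (y + z) a := by
  funext i
  simp only [combine, Pi.add_apply]
  by_cases h : i ∈ T <;> simp [h]

private lemma sum_combine {n : ℕ} (T : Finset (Fin n)) (g : (Fin n → ZMod 2) → ℝ) :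
    ∑ x : Fin n → ZMod 2, g x
    = ∑ y : {i : Fin n // i ∈ T} → ZMod 2, ∑ a : {i : Fin n // i ∉ T} → ZMod 2,
        g (combine T y a) := by
  rw [← (Equiv.piEquivPiSubtypeProd (fun i : Fin n => i ∈ T) (fun _ => ZMod 2)).symm.sum_comp g,
    Fintype.sum_prod_type]
  rfl

private lemma key {n : ℕ} (T : Finset (Fin n)) (α : Fin n → ZMod 2)
    (hα : α ∈ univ.filter (fun a : Fin n → ZMod 2 => ∀ i, a i ≠ 0 → i ∈ T)) :
    combine T (fun j : {i : Fin n // i ∈ T} => α j.1) 0 = α := by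
  simp only [mem_filter, mem_univ, true_and] at hα
  funext i
  by_cases h : i ∈ T
  · simp [combine, h]
  · simp only [combine, h, dif_neg, not_false_iff, Pi.zero_apply]
    by_contra h0
    exact h (hα i (Ne.symm h0))

private lemma sum_filter_combine {n : ℕ} (T : Finset (Fin n)) (g : (Fin n → ZMod 2) → ℝ) :
    ∑ α ∈ univ.filter (fun a : Fin n → ZMod 2 => ∀ i, a i ≠ 0 → i ∈ T), g α
    = ∑ β : {i : Fin n // i ∈ T} → ZMod 2, g (combine T β 0) := by
  apply Finset.sum_nbij' (fun α => fun j : {i : Fin n // i ∈ T} => α j.1)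
    (fun β => combine T β 0)
  · intro α hα; simp
  · intro β hβ
    simp only [mem_filter, mem_univ, true_and]
    intro i hi
    by_contra h
    simp [combine, h] at hi
  · intro α hα
    exact key T α hα
  · intro β hβ
    funext j
    simp [combine, j.2]
  · intro α hα
    rw [key T α hα]

/-- `inf_f(T) = 1 - 2^{-(n-t)} Σ_{a ∈ F_2^{n-t}} (W_{f_a}(0_t))²`. -/
theorem influence_eq_restriction {n : ℕ} (f : (Fin n → ZMod 2) → ZMod 2)
    (T : Finset (Fin n)) (hT : T.Nonempty) :
    influence f T = 1 - (1 / 2 ^ (n - T.card)) *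
      ∑ a : {i : Fin n // i ∉ T} → ZMod 2, (restWalsh0 f T a) ^ 2 := by
  classical
  set t := T.card with htdef
  have ht : t ≤ n := by simpa using T.card_le_univ
  -- the common double sum
  set S : ℝ := ∑ y : {i : Fin n // i ∈ T} → ZMod 2, ∑ z : {i : Fin n // i ∈ T} → ZMod 2,
      ∑ a : {i : Fin n // i ∉ T} → ZMod 2,
        (-1:ℝ) ^ (f (combine T y a) + f (combine T z a)).val with hS
  have claim1 :
      (∑ α ∈ univ.filter (fun a : Fin n → ZMod 2 => ∀ i, a i ≠ 0 → i ∈ T), autocorr f α)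
      = (1 / 2 ^ n) * S := by
    unfold autocorr
    rw [← Finset.mul_sum]
    congr 1
    rw [sum_filter_combine T]
    have step1 : ∀ β : {i : Fin n // i ∈ T} → ZMod 2,
        (∑ x : Fin n → ZMod 2, (-1:ℝ) ^ (f x + f (x + combine T β 0)).val)
        = ∑ y : {i : Fin n // i ∈ T} → ZMod 2, ∑ a : {i : Fin n // i ∉ T} → ZMod 2,
            (-1:ℝ) ^ (f (combine T y a) + f (combine T (y + β) a)).val := by
      intro β
      rw [sum_combine T (fun x => (-1:ℝ) ^ (f x + f (x + combine T β 0)).val)]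
      refine Finset.sum_congr rfl fun y _ => Finset.sum_congr rfl fun a _ => ?_
      rw [combine_add]
    calc ∑ β : {i : Fin n // i ∈ T} → ZMod 2,
            ∑ x : Fin n → ZMod 2, (-1:ℝ) ^ (f x + f (x + combine T β 0)).val
        = ∑ β : {i : Fin n // i ∈ T} → ZMod 2, ∑ y : {i : Fin n // i ∈ T} → ZMod 2,
            ∑ a : {i : Fin n // i ∉ T} → ZMod 2,
              (-1:ℝ) ^ (f (combine T y a) + f (combine T (y + β) a)).val := by
          exact Finset.sum_congr rfl fun β _ => step1 β
      _ = ∑ y : {i : Fin n // i ∈ T} → ZMod 2, ∑ β : {i : Fin n // i ∈ T} → ZMod 2,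
            ∑ a : {i : Fin n // i ∉ T} → ZMod 2,
              (-1:ℝ) ^ (f (combine T y a) + f (combine T (y + β) a)).val := Finset.sum_comm
      _ = S := by
          refine Finset.sum_congr rfl fun y _ => ?_
          exact Equiv.sum_comp (Equiv.addLeft y) (fun z =>
            ∑ a : {i : Fin n // i ∉ T} → ZMod 2,
              (-1:ℝ) ^ (f (combine T y a) + f (combine T z a)).val)
  have claim2 :
      (∑ a : {i : Fin n // i ∉ T} → ZMod 2, (restWalsh0 f T a) ^ 2)
      = (1 / 2 ^ (2 * t)) * S := by
    unfold restWalsh0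
    have : ∀ a : {i : Fin n // i ∉ T} → ZMod 2,
        ((1 / 2 ^ t : ℝ) * ∑ y : {i : Fin n // i ∈ T} → ZMod 2,
          (-1:ℝ) ^ (f (combine T y a)).val) ^ 2
        = (1 / 2 ^ (2 * t)) * ∑ y : {i : Fin n // i ∈ T} → ZMod 2,
            ∑ z : {i : Fin n // i ∈ T} → ZMod 2,
              (-1:ℝ) ^ (f (combine T y a) + f (combine T z a)).val := by
      intro a
      rw [mul_pow, div_pow, one_pow, ← pow_mul, mul_comm t 2, sq, Finset.sum_mul_sum]
      congr 1
      exact Finset.sum_congr rfl fun y _ => Finset.sum_congr rfl fun z _ => (npa _ _).symm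
    calc (∑ a : {i : Fin n // i ∉ T} → ZMod 2,
            ((1 / 2 ^ t : ℝ) * ∑ y : {i : Fin n // i ∈ T} → ZMod 2,
              (-1:ℝ) ^ (f (combine T y a)).val) ^ 2)
        = ∑ a : {i : Fin n // i ∉ T} → ZMod 2, (1 / 2 ^ (2 * t) : ℝ) *
            ∑ y : {i : Fin n // i ∈ T} → ZMod 2, ∑ z : {i : Fin n // i ∈ T} → ZMod 2,
              (-1:ℝ) ^ (f (combine T y a) + f (combine T z a)).val :=
          Finset.sum_congr rfl fun a _ => this a
      _ = (1 / 2 ^ (2 * t)) * ∑ a : {i : Fin n // i ∉ T} → ZMod 2,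
            ∑ y : {i : Fin n // i ∈ T} → ZMod 2, ∑ z : {i : Fin n // i ∈ T} → ZMod 2,
              (-1:ℝ) ^ (f (combine T y a) + f (combine T z a)).val := by
          rw [← Finset.mul_sum]
      _ = (1 / 2 ^ (2 * t)) * S := by
          congr 1
          rw [Finset.sum_comm]
          exact Finset.sum_congr rfl fun y _ => Finset.sum_comm
  unfold influence
  rw [claim1, claim2, ← mul_assoc, ← mul_assoc]
  have hc : (1 / 2 ^ t : ℝ) * (1 / 2 ^ n) = (1 / 2 ^ (n - t)) * (1 / 2 ^ (2 * t)) := by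
    field_simp
    rw [← pow_add, ← pow_add]
    congr 1
    omega
  rw [hc]

end BF
end

section
/- Let f be an n-variable Boolean function and T ⊆ [n] a nonempty subset. Then inf_f(T) = 0 if and only if f is degenerate on the variables indexed by T. -/
open Finset

namespace BF

lemma z2_add_self (u : ZMod 2) : u + u = 0 := by revert u; decide

lemma z2_add_eq_zero_iff (u w : ZMod 2) : u + w = 0 ↔ u = w := by revert u w; decide

lemma sign_one_iff (v : ZMod 2) : (-1:ℝ)^v.val = 1 ↔ v = 0 := by
  rcases (show v = 0 ∨ v = 1 by revert v; decide) with h | h <;> subst h <;>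
    simp [ZMod.val_one] <;> norm_num

lemma sign_cases (v : ZMod 2) : (-1:ℝ)^v.val = 1 ∨ (-1:ℝ)^v.val = -1 := by
  rcases (show v = 0 ∨ v = 1 by revert v; decide) with h | h <;> subst h <;>
    simp [ZMod.val_one]

/-- `inf_f(T) = 0` iff `f` is degenerate on the variables indexed by `T`,
i.e. the value of `f` depends only on the coordinates outside `T`. -/
theorem influence_eq_zero_iff_degenerate {n : ℕ} (f : (Fin n → ZMod 2) → ZMod 2)
    (T : Finset (Fin n)) (hT : T.Nonempty) :
    influence f T = 0 ↔
      ∀ x y : Fin n → ZMod 2, (∀ i, i ∉ T → x i = y i) → f x = f y := by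
  classical
  set S : Finset (Fin n → ZMod 2) :=
    univ.filter (fun a : Fin n → ZMod 2 => ∀ i, a i ≠ 0 → i ∈ T) with hSdef
  have hmemS : ∀ a : Fin n → ZMod 2, a ∈ S ↔ ∀ i, a i ≠ 0 → i ∈ T := by
    intro a; simp [hSdef]
  have hcardS : S.card = 2 ^ T.card := by
    have h1 : S.card = Fintype.card ({i // i ∈ T} → ZMod 2) := by
      rw [← Finset.card_univ]
      refine Finset.card_bij' (fun a _ => fun i => a i)
        (fun g _ => fun i => if h : i ∈ T then g ⟨i, h⟩ else 0) ?_ ?_ ?_ ?_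
      · intro a ha; exact Finset.mem_univ _
      · intro g hg; rw [hmemS]
        intro i hi; by_contra hiT; simp [hiT] at hi
      · intro a ha; funext i
        by_cases h : i ∈ T
        · simp [h]
        · rw [hmemS] at ha
          simp [h]
          by_contra h0; exact h (ha i (fun e => h0 e.symm))
      · intro g hg; funext i; simp
    rw [h1, Fintype.card_fun, ZMod.card, Fintype.card_coe]
  have hcard2n : (Finset.univ : Finset (Fin n → ZMod 2)).card = 2 ^ n := by
    rw [Finset.card_univ, Fintype.card_fun, ZMod.card, Fintype.card_fin]
  -- key reformulation
  have hkey : influence f T =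
      (1 / 2 ^ T.card) * ((1 / 2 ^ n) *
        ∑ a ∈ S, ∑ x : Fin n → ZMod 2, (1 - (-1:ℝ) ^ (f x + f (x + a)).val)) := by
    unfold influence autocorr
    rw [← hSdef]
    have h2 : ∀ a ∈ S, ∑ x : Fin n → ZMod 2, (1 - (-1:ℝ) ^ (f x + f (x + a)).val)
        = (2:ℝ)^n - ∑ x : Fin n → ZMod 2, (-1:ℝ) ^ (f x + f (x + a)).val := by
      intro a _
      rw [Finset.sum_sub_distrib, Finset.sum_const, hcard2n]
      push_cast; ring
    have h3 : ∑ a ∈ S, ∑ x : Fin n → ZMod 2, (1 - (-1:ℝ) ^ (f x + f (x + a)).val)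
        = (2:ℝ)^T.card * 2^n - ∑ a ∈ S, ∑ x : Fin n → ZMod 2, (-1:ℝ) ^ (f x + f (x + a)).val := by
      rw [Finset.sum_congr rfl h2, Finset.sum_sub_distrib, Finset.sum_const, nsmul_eq_mul, hcardS]
      push_cast; ring
    rw [h3, ← Finset.mul_sum]
    have h2n : (2:ℝ)^n ≠ 0 := by positivity
    have h2T : (2:ℝ)^T.card ≠ 0 := by positivity
    field_simp
  rw [hkey]
  have hnonneg : ∀ a ∈ S, (0:ℝ) ≤ ∑ x : Fin n → ZMod 2, (1 - (-1:ℝ) ^ (f x + f (x + a)).val) := by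
    intro a _
    apply Finset.sum_nonneg
    intro x _
    rcases sign_cases (f x + f (x + a)) with h | h <;> rw [h] <;> norm_num
  have hiff : (1 / (2:ℝ) ^ T.card) * ((1 / 2 ^ n) *
        ∑ a ∈ S, ∑ x : Fin n → ZMod 2, (1 - (-1:ℝ) ^ (f x + f (x + a)).val)) = 0 ↔
      ∀ a ∈ S, ∀ x : Fin n → ZMod 2, f (x + a) = f x := by
    rw [← mul_assoc, mul_eq_zero]
    have hne : ¬ ((1 / (2:ℝ) ^ T.card) * (1 / 2 ^ n) = 0) := by positivity
    simp only [hne, false_or]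
    rw [Finset.sum_eq_zero_iff_of_nonneg hnonneg]
    apply forall_congr'; intro a
    apply imp_congr_right; intro ha
    rw [Finset.sum_eq_zero_iff_of_nonneg (by
      intro x _
      rcases sign_cases (f x + f (x + a)) with h | h <;> rw [h] <;> norm_num)]
    constructor
    · intro h x
      have hx := h x (Finset.mem_univ x)
      have h1 : (-1:ℝ)^(f x + f (x + a)).val = 1 := by linarith
      have h0 := (sign_one_iff _).mp h1
      exact ((z2_add_eq_zero_iff _ _).mp h0).symm
    · intro h x _
      have h0 : f x + f (x + a) = 0 := by rw [h x]; exact z2_add_self _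
      rw [h0]
      simp
  rw [hiff]
  constructor
  · intro h x y hxy
    have haS : (x + y) ∈ S := by
      rw [hmemS]
      intro i hi
      by_contra hiT
      apply hi
      have hx := hxy i hiT
      show x i + y i = 0
      rw [hx]; exact z2_add_self _
    have hfy := h (x + y) haS x
    have hx : x + (x + y) = y := by
      funext i
      show x i + (x i + y i) = y i
      rw [← add_assoc, z2_add_self, zero_add]
    rw [hx] at hfy
    exact hfy.symm
  · intro h a ha x
    apply h
    intro i hiT
    have h0 : a i = 0 := by
      by_contra h0
      exact hiT ((hmemS a).mp ha i h0)
    show x i + a i = x i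
    rw [h0, add_zero]

end BF
end

section
/- Let f be an n-variable Boolean function and T ⊆ [n] a nonempty subset with #T = t. Then inf_f(T) = 1 if and only if for every α ∈ F_2^{n−t} the restriction f_α (obtained by fixing the variables indexed by the complement of T to the values of α) is a balanced function on t variables. -/
/-!
Split an input as `(y, b)`, with `y` its coordinates in `T` and `b` the others. Then
`Σ_{α ≤ χ_T} 2^n C_f(α) = Σ_b S_b²`, where `S_b = Σ_y (-1)^{f(y, b)} = 2^t W_{f_b}(0)`:
expand the autocorrelation as `Σ_b Σ_y Σ_z (-1)^{f(y, b)} (-1)^{f(y + z, b)}` and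
substitute `z ↦ y + z`. So `inf_f(T) = 1 - 2^{t-n} Σ_b W_{f_b}(0)²` equals `1` exactly when
every `W_{f_b}(0)` vanishes, i.e. when every restriction `f_b` is balanced.
-/

open Finset

namespace BF

lemma neg_one_pow_val_add {R : Type*} [Ring R] (u v : ZMod 2) :
    (-1 : R) ^ (u + v).val = (-1) ^ u.val * (-1) ^ v.val := by
  rw [ZMod.val_add, ← neg_one_pow_eq_pow_mod_two, pow_add]

lemma sum_neg_one_pow_val {α R : Type*} [Fintype α] [Ring R] (g : α → ZMod 2) :
    ∑ y, (-1 : R) ^ (g y).val = Fintype.card α - 2 * #{y | g y = 1} := by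
  have hsign : ∀ u : ZMod 2, (-1 : R) ^ u.val = 1 - 2 * if u = 1 then 1 else 0 := by
    intro u
    obtain rfl | rfl : u = 0 ∨ u = 1 := by revert u; decide
    · simp
    · norm_num [ZMod.val_one]
  simp only [hsign, sum_sub_distrib, ← mul_sum, sum_boole, sum_const, card_univ, nsmul_one]

lemma sum_sum_mul_add_eq_sq {G R : Type*} [AddCommGroup G] [Fintype G] [CommSemiring R]
    (h : G → R) : ∑ z, ∑ y, h y * h (y + z) = (∑ y, h y) ^ 2 := by
  rw [sum_comm, sq, Fintype.sum_mul_sum]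
  exact sum_congr rfl fun y _ => Fintype.sum_equiv (Equiv.addLeft y) _ _ fun _ => rfl

section Combine

variable {n : ℕ} (T : Finset (Fin n))

lemma combine_add_combine (y z : {i // i ∈ T} → ZMod 2) (b c : {i // i ∉ T} → ZMod 2) :
    combine T y b + combine T z c = combine T (y + z) (b + c) := by
  funext i
  by_cases h : i ∈ T <;> simp [combine, h]

def combineEquiv :
    (({i // i ∈ T} → ZMod 2) × ({i // i ∉ T} → ZMod 2)) ≃ (Fin n → ZMod 2) where
  toFun p := combine T p.1 p.2
  invFun x := (fun i => x i, fun i => x i)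
  left_inv p := by ext i <;> simp [combine, i.2]
  right_inv x := by funext i; by_cases h : i ∈ T <;> simp [combine, h]

lemma sum_filter_support_subset_eq_sum_combine {M : Type*} [AddCommMonoid M]
    (g : (Fin n → ZMod 2) → M) :
    ∑ a ∈ univ.filter (fun a : Fin n → ZMod 2 => ∀ i, a i ≠ 0 → i ∈ T), g a
      = ∑ z : {i // i ∈ T} → ZMod 2, g (combine T z 0) := by
  have hcombine : ∀ a ∈ univ.filter (fun a : Fin n → ZMod 2 => ∀ i, a i ≠ 0 → i ∈ T),
      combine T (fun i => a i) 0 = a := by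
    intro a ha
    simp only [mem_filter, mem_univ, true_and] at ha
    funext i
    by_cases hi : i ∈ T
    · simp [combine, hi]
    · simpa [combine, hi] using (not_imp_comm.mp (ha i) hi).symm
  refine sum_nbij' (fun a i => a i) (fun z => combine T z 0) (by simp) ?_ hcombine
    (by simp [combine]) fun a ha => by rw [hcombine a ha]
  intro z _
  simp only [mem_filter, mem_univ, true_and]
  intro i hi
  by_contra hiT
  simp [combine, hiT] at hi

end Combine

lemma sum_filter_support_subset_sum_neg_one_pow_eq_sum_sq {R : Type*} [CommRing R] {n : ℕ}
    (f : (Fin n → ZMod 2) → ZMod 2) (T : Finset (Fin n)) :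
    ∑ a ∈ univ.filter (fun a : Fin n → ZMod 2 => ∀ i, a i ≠ 0 → i ∈ T),
        ∑ x, (-1 : R) ^ (f x + f (x + a)).val
      = ∑ b : {i // i ∉ T} → ZMod 2, (∑ y, (-1 : R) ^ (f (combine T y b)).val) ^ 2 := by
  have hsplit : ∀ z : {i // i ∈ T} → ZMod 2,
      ∑ x, (-1 : R) ^ (f x + f (x + combine T z 0)).val
        = ∑ b : {i // i ∉ T} → ZMod 2, ∑ y,
            (-1 : R) ^ (f (combine T y b)).val * (-1) ^ (f (combine T (y + z) b)).val := by
    intro z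
    rw [← (combineEquiv T).sum_comp, Fintype.sum_prod_type_right]
    refine sum_congr rfl fun b _ => sum_congr rfl fun y _ => ?_
    simp only [combineEquiv, Equiv.coe_fn_mk, combine_add_combine, add_zero, neg_one_pow_val_add]
  simp only [sum_filter_support_subset_eq_sum_combine, hsplit]
  rw [sum_comm]
  exact sum_congr rfl fun b _ => sum_sum_mul_add_eq_sq _

lemma influence_eq_one_sub_sum_sq_restWalsh0 {n : ℕ} (f : (Fin n → ZMod 2) → ZMod 2)
    (T : Finset (Fin n)) :
    influence f T = 1 - 2 ^ T.card / 2 ^ n * ∑ b, restWalsh0 f T b ^ 2 := by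
  simp only [influence, autocorr, ← mul_sum, sum_filter_support_subset_sum_neg_one_pow_eq_sum_sq,
    restWalsh0, mul_pow]
  field_simp

lemma restWalsh0_eq_zero_iff {n : ℕ} (f : (Fin n → ZMod 2) → ZMod 2) (T : Finset (Fin n))
    (a : {i // i ∉ T} → ZMod 2) :
    restWalsh0 f T a = 0 ↔ 2 * #{y | f (combine T y a) = 1} = 2 ^ T.card := by
  rw [restWalsh0, sum_neg_one_pow_val, mul_eq_zero, or_iff_right (by positivity), sub_eq_zero,
    eq_comm, Fintype.card_fun, ZMod.card, Fintype.card_coe]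
  exact_mod_cast Iff.rfl

theorem influence_eq_one_iff_balanced_general {n : ℕ} (f : (Fin n → ZMod 2) → ZMod 2)
    (T : Finset (Fin n)) :
    influence f T = 1 ↔
      ∀ a : {i : Fin n // i ∉ T} → ZMod 2,
        2 * (univ.filter fun y : {i : Fin n // i ∈ T} → ZMod 2 =>
          f (combine T y a) = 1).card = 2 ^ T.card := by
  rw [influence_eq_one_sub_sum_sq_restWalsh0, sub_eq_self, mul_eq_zero,
    or_iff_right (by positivity), sum_eq_zero_iff_of_nonneg fun _ _ => sq_nonneg _]
  simp only [mem_univ, true_imp_iff, sq_eq_zero_iff, restWalsh0_eq_zero_iff]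

/-- `inf_f(T) = 1` iff every restriction `f_a` (fixing the variables outside
`T` to the values of `a`) is balanced. -/
theorem influence_eq_one_iff_balanced {n : ℕ} (f : (Fin n → ZMod 2) → ZMod 2)
    (T : Finset (Fin n)) (hT : T.Nonempty) :
    influence f T = 1 ↔
      ∀ a : {i : Fin n // i ∉ T} → ZMod 2,
        2 * (univ.filter fun y : {i : Fin n // i ∈ T} → ZMod 2 =>
          f (combine T y a) = 1).card = 2 ^ T.card :=
  influence_eq_one_iff_balanced_general f T

end BF
end

section
/- Let f be an n-variable Boolean function and T ⊆ [n] a nonempty subset. Then PI_f(T) ≤ inf_f(T). Consequently, t-PI(f) ≤ t-inf(f) for all 1 ≤ t ≤ n. -/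
open Finset

namespace BF

/-- Pseudo-influence `PI_f(T) = 2^{-#T} Σ_{a ≤ χ_T} (-1)^{wt(a)} C_f(a)`. -/
noncomputable def pseudoInf {n : ℕ} (f : (Fin n → ZMod 2) → ZMod 2) (T : Finset (Fin n)) : ℝ :=
  (1 / 2 ^ T.card) *
    ∑ a ∈ univ.filter (fun a : Fin n → ZMod 2 => ∀ i, a i ≠ 0 → i ∈ T),
      (-1 : ℝ) ^ wt a * autocorr f a

/-- Total pseudo-influence `t-PI(f) = (Σ_{#T = t} PI_f(T)) / C(n,t)`. -/
noncomputable def totalPI {n : ℕ} (f : (Fin n → ZMod 2) → ZMod 2) (t : ℕ) : ℝ :=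
  (∑ T ∈ univ.filter (fun T : Finset (Fin n) => T.card = t), pseudoInf f T) / (n.choose t)

lemma wt_eq_sum {n : ℕ} (a : Fin n → ZMod 2) : wt a = ∑ i, (a i).val := by
  unfold wt
  rw [Finset.card_filter]
  refine Finset.sum_congr rfl fun i _ => ?_
  have : ∀ x : ZMod 2, (if x ≠ 0 then 1 else 0 : ℕ) = x.val := by decide
  exact this (a i)

lemma S_eq {n : ℕ} (T : Finset (Fin n)) :
    univ.filter (fun a : Fin n → ZMod 2 => ∀ i, a i ≠ 0 → i ∈ T) =
      Fintype.piFinset (fun i => if i ∈ T then (univ : Finset (ZMod 2)) else {0}) := by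
  ext a
  simp only [mem_filter, mem_univ, true_and, Fintype.mem_piFinset]
  constructor
  · intro h i
    by_cases hi : i ∈ T
    · simp [hi]
    · simp only [hi, if_neg, Finset.mem_singleton, if_false]
      by_contra hne
      exact hi (h i hne)
  · intro h i hne
    by_contra hi
    have := h i
    simp [hi] at this
    exact hne this

lemma sum_neg_one_wt {n : ℕ} (T : Finset (Fin n)) (hT : T.Nonempty) :
    ∑ a ∈ univ.filter (fun a : Fin n → ZMod 2 => ∀ i, a i ≠ 0 → i ∈ T),
      (-1 : ℝ) ^ wt a = 0 := by
  rw [S_eq]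
  have : ∀ a : Fin n → ZMod 2, (-1 : ℝ) ^ wt a = ∏ i, (-1 : ℝ) ^ (a i).val := by
    intro a
    rw [wt_eq_sum, Finset.prod_pow_eq_pow_sum]
  simp_rw [this]
  rw [← Finset.prod_univ_sum (f := fun (_ : Fin n) (x : ZMod 2) => (-1:ℝ) ^ x.val)]
  obtain ⟨i0, hi0⟩ := hT
  apply Finset.prod_eq_zero (Finset.mem_univ i0)
  simp only [hi0, if_true]
  rw [show (univ : Finset (ZMod 2)) = {0, 1} by decide, Finset.sum_insert (by decide),
    Finset.sum_singleton]
  norm_num [ZMod.val_one]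

lemma card_S {n : ℕ} (T : Finset (Fin n)) :
    (univ.filter (fun a : Fin n → ZMod 2 => ∀ i, a i ≠ 0 → i ∈ T)).card = 2 ^ T.card := by
  rw [S_eq, Fintype.card_piFinset]
  have : ∀ i : Fin n, (if i ∈ T then (univ : Finset (ZMod 2)) else {0}).card =
      if i ∈ T then 2 else 1 := by
    intro i; split <;> simp
  simp_rw [this]
  rw [Finset.prod_ite_mem, Finset.univ_inter, Finset.prod_const]

lemma autocorr_le_one {n : ℕ} (f : (Fin n → ZMod 2) → ZMod 2) (a : Fin n → ZMod 2) :
    autocorr f a ≤ 1 := by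
  unfold autocorr
  have h : ∑ x : Fin n → ZMod 2, (-1 : ℝ) ^ (f x + f (x + a)).val
      ≤ ∑ _x : Fin n → ZMod 2, (1 : ℝ) := by
    refine Finset.sum_le_sum fun x _ => ?_
    calc (-1 : ℝ) ^ (f x + f (x + a)).val ≤ |(-1 : ℝ) ^ (f x + f (x + a)).val| := le_abs_self _
      _ = 1 := by rw [abs_pow, abs_neg, abs_one, one_pow]
  have hcard : ∑ _x : Fin n → ZMod 2, (1 : ℝ) = 2 ^ n := by
    rw [Finset.sum_const, Finset.card_univ, Fintype.card_fun]
    simp [ZMod.card]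
  calc (1 / 2 ^ n : ℝ) * ∑ x : Fin n → ZMod 2, (-1 : ℝ) ^ (f x + f (x + a)).val
      ≤ (1 / 2 ^ n) * 2 ^ n := by
        apply mul_le_mul_of_nonneg_left _ (by positivity)
        rw [← hcard]; exact h
    _ = 1 := by field_simp

/-- `PI_f(T) ≤ inf_f(T)`, and consequently `t-PI(f) ≤ t-inf(f)`. -/
theorem pseudoInf_le_influence {n : ℕ} (f : (Fin n → ZMod 2) → ZMod 2) :
    (∀ T : Finset (Fin n), T.Nonempty → pseudoInf f T ≤ influence f T) ∧
      ∀ t : ℕ, 1 ≤ t → t ≤ n → totalPI f t ≤ totalInf f t := by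
  have main : ∀ T : Finset (Fin n), T.Nonempty → pseudoInf f T ≤ influence f T := by
    intro T hT
    set S := univ.filter (fun a : Fin n → ZMod 2 => ∀ i, a i ≠ 0 → i ∈ T) with hS
    have key : ∑ a ∈ S, (1 + (-1 : ℝ) ^ wt a) * autocorr f a ≤ 2 ^ T.card := by
      calc ∑ a ∈ S, (1 + (-1 : ℝ) ^ wt a) * autocorr f a
          ≤ ∑ a ∈ S, (1 + (-1 : ℝ) ^ wt a) := by
            refine Finset.sum_le_sum fun a _ => ?_
            have h1 : (0 : ℝ) ≤ 1 + (-1 : ℝ) ^ wt a := by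
              rcases Nat.even_or_odd (wt a) with h | h
              · rw [h.neg_one_pow]; norm_num
              · rw [h.neg_one_pow]; norm_num
            exact mul_le_of_le_one_right h1 (autocorr_le_one f a)
        _ = (S.card : ℝ) + ∑ a ∈ S, (-1 : ℝ) ^ wt a := by
            rw [Finset.sum_add_distrib, Finset.sum_const, nsmul_eq_mul, mul_one]
        _ = 2 ^ T.card := by
            rw [hS, card_S, sum_neg_one_wt T hT]; push_cast; ring
    have e : ∑ a ∈ S, (1 + (-1 : ℝ) ^ wt a) * autocorr f a
        = ∑ a ∈ S, (-1 : ℝ) ^ wt a * autocorr f a + ∑ a ∈ S, autocorr f a := by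
      rw [← Finset.sum_add_distrib]
      exact Finset.sum_congr rfl fun a _ => by ring
    have hpos : (0 : ℝ) < (1 / 2 ^ T.card : ℝ) := by positivity
    have h2 : (1 / 2 ^ T.card : ℝ) * ∑ a ∈ S, (1 + (-1 : ℝ) ^ wt a) * autocorr f a ≤ 1 := by
      calc (1 / 2 ^ T.card : ℝ) * ∑ a ∈ S, (1 + (-1 : ℝ) ^ wt a) * autocorr f a
          ≤ (1 / 2 ^ T.card : ℝ) * 2 ^ T.card :=
            mul_le_mul_of_nonneg_left key hpos.le
        _ = 1 := by field_simp
    rw [e, mul_add] at h2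
    unfold pseudoInf influence
    rw [← hS]
    linarith
  refine ⟨main, fun t ht htn => ?_⟩
  unfold totalPI totalInf
  have hc : (0 : ℝ) < (n.choose t : ℝ) := by exact_mod_cast Nat.choose_pos htn
  refine div_le_div_of_nonneg_right ?_ hc.le
  refine Finset.sum_le_sum fun T hTt => ?_
  rw [Finset.mem_filter] at hTt
  exact main T (Finset.card_pos.mp (by rw [hTt.2]; omega))

end BF
end
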